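/- If h : D_k(I,d) → (J,e) is a homomorphism of pointed interpretations, then its Kleisli coextension h* : D_k(I,d) → D_k(J,e) is a homomorphism of pointed interpretations. -/

import Mathlib

/-- An interpretation over concept names `C` and role names `R` with domain `D`. -/
structure Interp (C R D : Type) where
  concept : C → Set D
  role : R → Set (D × D)

variable {C R DI DJ DK : Type}

/-- `ValidFrom I a l`: the alternating sequence of role steps `l` is a valid path in `I`
starting at `a` (consecutive elements are connected by the corresponding role). -/
def ValidFrom (I : Interp C R DI) : DI → List (R × DI) → Prop
  | _, [] => True
  | a, p :: rest => (a, p.2) ∈ I.role p.1 ∧ ValidFrom I p.2 rest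

/-- Last domain element of the path `d · l`. -/
def pathLast (d : DI) (l : List (R × DI)) : DI := (l.map Prod.snd).getLastD d

/-- An element of the depth-`k` unravelling of `(I, d)`:
an alternating sequence `[d, r₁, a₁, …, r_j, a_j]`, encoded by its list of steps. -/
structure UnravelElem (I : Interp C R DI) (d : DI) (k : ℕ) where
  steps : List (R × DI)
  len_le : steps.length ≤ k
  valid : ValidFrom I d steps

/-- The depth-`k` unravelling `D_k(I, d)` as an interpretation. -/
def unravel (I : Interp C R DI) (d : DI) (k : ℕ) : Interp C R (UnravelElem I d k) where
  concept c := {s | pathLast d s.steps ∈ I.concept c}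
  role r := {p | ∃ b, p.2.steps = p.1.steps ++ [(r, b)]}

/-- The distinguished element `[d]` of the unravelling. -/
def uroot (I : Interp C R DI) (d : DI) (k : ℕ) : UnravelElem I d k :=
  ⟨[], by simp, trivial⟩

/-- The counit `ε`, sending a sequence to its last element. -/
def counit (I : Interp C R DI) (d : DI) (k : ℕ) (s : UnravelElem I d k) : DI :=
  pathLast d s.steps

/-- Homomorphism of pointed interpretations. -/
structure IsHom (I : Interp C R DI) (dI : DI) (J : Interp C R DJ) (dJ : DJ)
    (h : DI → DJ) : Prop where
  point : h dI = dJ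
  concept : ∀ c x, x ∈ I.concept c → h x ∈ J.concept c
  role : ∀ r x y, (x, y) ∈ I.role r → (h x, h y) ∈ J.role r

theorem pathLast_concat (d : DI) (l : List (R × DI)) (p : R × DI) :
    pathLast d (l ++ [p]) = p.2 := by
  simp [pathLast]

theorem pathLast_cons (d : DI) (p : R × DI) (l : List (R × DI)) :
    pathLast d (p :: l) = pathLast p.2 l := by
  cases l with
  | nil => rfl
  | cons q m => simp only [pathLast, List.map_cons, List.getLastD_cons]

theorem validFrom_append (I : Interp C R DI) :
    ∀ (a : DI) (l₁ l₂ : List (R × DI)),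
      ValidFrom I a (l₁ ++ l₂) ↔ ValidFrom I a l₁ ∧ ValidFrom I (pathLast a l₁) l₂
  | a, [], l₂ => by simp [ValidFrom, pathLast]
  | a, p :: rest, l₂ => by
      simp [ValidFrom, validFrom_append I p.2 rest l₂, pathLast_cons, and_assoc]

/-- Auxiliary for the Kleisli coextension: process the steps from the left,
carrying the already-consumed prefix. -/
def coextFrom (F : List (R × DI) → DJ) : List (R × DI) → List (R × DI) → List (R × DJ)
  | _, [] => []
  | pre, p :: rest => (p.1, F (pre ++ [p])) :: coextFrom F (pre ++ [p]) rest

/-- Raw Kleisli coextension on step lists: satisfies `coextList F [] = []` and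
`coextList F (s ++ [(r,d')]) = coextList F s ++ [(r, F (s ++ [(r,d')]))]`. -/
def coextList (F : List (R × DI) → DJ) (l : List (R × DI)) : List (R × DJ) :=
  coextFrom F [] l

open Classical in
/-- Lift a function on unravelling elements to all step lists (junk value elsewhere). -/
noncomputable def liftF (I : Interp C R DI) (dI : DI) (k : ℕ)
    (f : UnravelElem I dI k → DJ) (default : DJ) (l : List (R × DI)) : DJ :=
  if h : l.length ≤ k ∧ ValidFrom I dI l then f ⟨l, h.1, h.2⟩ else default

theorem coextFrom_length (F : List (R × DI) → DJ) :
    ∀ pre l, (coextFrom F pre l).length = l.length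
  | _, [] => rfl
  | pre, p :: rest => by
      simp [coextFrom, coextFrom_length F (pre ++ [p]) rest]

theorem coextFrom_concat (F : List (R × DI) → DJ) :
    ∀ pre l x, coextFrom F pre (l ++ [x]) =
      coextFrom F pre l ++ [(x.1, F (pre ++ l ++ [x]))]
  | pre, [], x => by simp [coextFrom]
  | pre, p :: rest, x => by
      simp [coextFrom, coextFrom_concat F (pre ++ [p]) rest x]

theorem coext_spec {I : Interp C R DI} {dI : DI} {k : ℕ} {J : Interp C R DJ} {dJ : DJ}
    (f : UnravelElem I dI k → DJ)
    (hf : IsHom (unravel I dI k) (uroot I dI k) J dJ f) :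
    ∀ (l : List (R × DI)) (hl : l.length ≤ k) (hv : ValidFrom I dI l),
      ValidFrom J dJ (coextList (liftF I dI k f dJ) l) ∧
      pathLast dJ (coextList (liftF I dI k f dJ) l) = f ⟨l, hl, hv⟩ := by
  intro l
  induction l using List.reverseRecOn with
  | nil =>
      intro hl hv
      refine ⟨trivial, ?_⟩
      simpa [coextList, coextFrom, pathLast, uroot] using hf.point.symm
  | append_singleton m p ih =>
      intro hl hv
      have hm : m.length ≤ k := by
        have h' := hl
        simp only [List.length_append, List.length_singleton] at h'
        omega
      have hvm : ValidFrom I dI m := ((validFrom_append I dI m [p]).mp hv).1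
      obtain ⟨ihv, ihl⟩ := ih hm hvm
      have hedge : ((⟨m, hm, hvm⟩ : UnravelElem I dI k), (⟨m ++ [p], hl, hv⟩ : UnravelElem I dI k))
          ∈ (unravel I dI k).role p.1 := ⟨p.2, by simp⟩
      have hr : (f ⟨m, hm, hvm⟩, f ⟨m ++ [p], hl, hv⟩) ∈ J.role p.1 :=
        hf.role p.1 _ _ hedge
      have hF : liftF I dI k f dJ (m ++ [p]) = f ⟨m ++ [p], hl, hv⟩ := by
        unfold liftF
        rw [dif_pos (⟨hl, hv⟩ : (m ++ [p]).length ≤ k ∧ ValidFrom I dI (m ++ [p]))]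
      have hcoe : coextList (liftF I dI k f dJ) (m ++ [p]) =
          coextList (liftF I dI k f dJ) m ++ [(p.1, f ⟨m ++ [p], hl, hv⟩)] := by
        unfold coextList
        rw [coextFrom_concat]
        simp only [List.nil_append, hF]
      rw [hcoe]
      constructor
      · rw [validFrom_append]
        exact ⟨ihv, by rw [ihl]; exact ⟨hr, trivial⟩⟩
      · rw [pathLast_concat]

/-- The Kleisli coextension `f* : D_k(I,d) → D_k(J,e)` of a homomorphism
`f : D_k(I,d) → (J,e)`. -/
noncomputable def coext {I : Interp C R DI} {dI : DI} {k : ℕ} {J : Interp C R DJ} {dJ : DJ}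
    (f : UnravelElem I dI k → DJ)
    (hf : IsHom (unravel I dI k) (uroot I dI k) J dJ f)
    (s : UnravelElem I dI k) : UnravelElem J dJ k :=
  ⟨coextList (liftF I dI k f dJ) s.steps,
   by simpa [coextList, coextFrom_length] using s.len_le,
   (coext_spec f hf s.steps s.len_le s.valid).1⟩

/-- the Kleisli coextension `h* : D_k(I,d) → D_k(J,e)` of a homomorphism
`h : D_k(I,d) → (J,e)` is a homomorphism of pointed interpretations. -/
theorem coext_isHom (k : ℕ) {I : Interp C R DI} {dI : DI}
    {J : Interp C R DJ} {dJ : DJ}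
    (h : UnravelElem I dI k → DJ)
    (hh : IsHom (unravel I dI k) (uroot I dI k) J dJ h) :
    IsHom (unravel I dI k) (uroot I dI k) (unravel J dJ k) (uroot J dJ k) (coext h hh) := by
  constructor
  · simp [coext, uroot, coextList, coextFrom]
  · intro c x hx
    have hs := coext_spec h hh x.steps x.len_le x.valid
    have : pathLast dJ (coextList (liftF I dI k h dJ) x.steps) = h x := by
      rw [hs.2]
    simpa [unravel, coext, this] using hh.concept c x hx
  · intro r x y hxy
    obtain ⟨b, hb⟩ := hxy
    refine ⟨h y, ?_⟩
    show coextList (liftF I dI k h dJ) y.steps =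
      coextList (liftF I dI k h dJ) x.steps ++ [(r, h y)]
    have hF : liftF I dI k h dJ y.steps = h y := by
      unfold liftF
      rw [dif_pos ⟨y.len_le, y.valid⟩]
    rw [hb, coextList, coextFrom_concat]
    simp only [List.nil_append, ← hb, hF, coextList]
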